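/- arXiv:math/0508069 — 7 statements merged into one kernel-verified Lean document; each statement's English description precedes it below -/
import Mathlib

section
/- Let p > 3 be a prime and let k ∈ ℤ/pℤ with k ≠ 0 and k ≠ -1. Then the set Ω_k^p has cardinality 2 if and only if k² + k + 1 = 0 in ℤ/pℤ; moreover, such an element k exists if and only if p ≡ 1 (mod 3). -/
/-- `Ω_k^p := {k, -1-k, k⁻¹, -1-k⁻¹, -(k+1)⁻¹, (k+1)⁻¹ - 1} ⊆ ℤ/pℤ`. -/
def Omega (p : ℕ) (k : ZMod p) : Finset (ZMod p) :=
  {k, -1 - k, k⁻¹, -1 - k⁻¹, -(k + 1)⁻¹, (k + 1)⁻¹ - 1}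

theorem stmt_2 (p : ℕ) [Fact p.Prime] (hp3 : 3 < p) (k : ZMod p)
    (hk0 : k ≠ 0) (hk1 : k ≠ -1) :
    ((Omega p k).card = 2 ↔ k ^ 2 + k + 1 = 0) ∧
    ((∃ k' : ZMod p, k' ≠ 0 ∧ k' ≠ -1 ∧ k' ^ 2 + k' + 1 = 0) ↔ p % 3 = 1) := by
  have hp : p.Prime := Fact.out
  have h3 : (3 : ZMod p) ≠ 0 := by
    have := (ZMod.natCast_eq_zero_iff 3 p).not.mpr
      (by intro h; have := Nat.le_of_dvd (by norm_num) h; omega)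
    simpa using this
  have h2 : (2 : ZMod p) ≠ 0 := by
    have := (ZMod.natCast_eq_zero_iff 2 p).not.mpr
      (by intro h; have := Nat.le_of_dvd (by norm_num) h; omega)
    simpa using this
  have hk1' : k + 1 ≠ 0 := by
    intro h; apply hk1; linear_combination h
  constructor
  · constructor
    · intro hcard
      by_cases h2k : 2 * k + 1 = 0
      · -- k = -1/2; then {k, -2, 1} ⊆ Omega, contradiction
        exfalso
        have hkinv : k⁻¹ = -2 := by
          rw [inv_eq_of_mul_eq_one_right]; linear_combination -h2k
        have hsub : ({k, -2, 1} : Finset (ZMod p)) ⊆ Omega p k := by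
          intro x hx
          simp only [Finset.mem_insert, Finset.mem_singleton] at hx
          rcases hx with rfl | rfl | rfl
          · simp [Omega]
          · simp only [Omega, Finset.mem_insert, Finset.mem_singleton]
            right; right; left; rw [hkinv]
          · simp only [Omega, Finset.mem_insert, Finset.mem_singleton]
            right; right; right; left; rw [hkinv]; ring
        have hd1 : k ≠ -2 := by intro h; apply h3; linear_combination -h2k + 2 * h
        have hd2 : k ≠ 1 := by intro h; apply h3; linear_combination h2k - 2 * h
        have hd3 : (-2 : ZMod p) ≠ 1 := by intro h; apply h3; linear_combination -h
        have h3le : 3 ≤ (Omega p k).card := by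
          have := Finset.card_le_card hsub
          rwa [Finset.card_insert_of_notMem (by simp [hd1, hd2]),
            Finset.card_insert_of_notMem (by simp [hd3]), Finset.card_singleton] at this
        omega
      · have hne : k ≠ -1 - k := by intro h; apply h2k; linear_combination h
        have hsub : ({k, -1 - k} : Finset (ZMod p)) ⊆ Omega p k := by
          intro x hx
          simp only [Finset.mem_insert, Finset.mem_singleton] at hx
          rcases hx with rfl | rfl <;> simp [Omega]
        have heq : Omega p k = {k, -1 - k} := by
          symm
          apply Finset.eq_of_subset_of_card_le hsub
          rw [hcard, Finset.card_insert_of_notMem (by simp [hne]), Finset.card_singleton]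
        have hkinv : k⁻¹ ∈ ({k, -1 - k} : Finset (ZMod p)) := by
          rw [← heq]; simp only [Omega, Finset.mem_insert, Finset.mem_singleton]; tauto
        simp only [Finset.mem_insert, Finset.mem_singleton] at hkinv
        rcases hkinv with h | h
        · -- k⁻¹ = k ⇒ k = 1 ⇒ contradiction via -(k+1)⁻¹
          exfalso
          have hk2 : k * k = 1 := by
            nth_rw 1 [← h]
            exact inv_mul_cancel₀ hk0
          have hk1eq : k = 1 := by
            have : (k - 1) * (k + 1) = 0 := by linear_combination hk2
            rcases mul_eq_zero.mp this with h' | h'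
            · linear_combination h'
            · exact absurd h' hk1'
          subst hk1eq
          have hinv2 : ((1 : ZMod p) + 1)⁻¹ = 2⁻¹ := by norm_num
          have hmem : -((1 : ZMod p) + 1)⁻¹ ∈ ({(1 : ZMod p), -1 - 1} : Finset (ZMod p)) := by
            rw [← heq]; simp only [Omega, Finset.mem_insert, Finset.mem_singleton]; tauto
          have h2i : (2 : ZMod p) * 2⁻¹ = 1 := mul_inv_cancel₀ h2
          simp only [Finset.mem_insert, Finset.mem_singleton, hinv2] at hmem
          rcases hmem with h' | h'
          · apply h3; linear_combination -2 * h' - h2i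
          · apply h3; linear_combination 2 * h' + h2i
        · -- k⁻¹ = -1 - k ⇒ k² + k + 1 = 0
          have : k * k⁻¹ = 1 := mul_inv_cancel₀ hk0
          rw [h] at this
          linear_combination -this
    · intro hroot
      have hkinv : k⁻¹ = -1 - k := by
        rw [inv_eq_of_mul_eq_one_right]; linear_combination -hroot
      have hk1inv : (k + 1)⁻¹ = -k := by
        rw [inv_eq_of_mul_eq_one_right]; linear_combination -hroot
      have hne : k ≠ -1 - k := by
        intro h
        apply h3
        linear_combination 4 * hroot - (2 * k + 1) * h
      have heq : Omega p k = {k, -1 - k} := by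
        rw [Omega, hkinv, hk1inv,
          show (-1 - (-1 - k) : ZMod p) = k from by ring,
          show (-(-k) : ZMod p) = k from by ring,
          show (-k - 1 : ZMod p) = -1 - k from by ring]
        ext x
        simp only [Finset.mem_insert, Finset.mem_singleton]
        tauto
      rw [heq, Finset.card_insert_of_notMem (by simp [hne]), Finset.card_singleton]
  · constructor
    · rintro ⟨k', hk'0, hk'1, hroot⟩
      have hk'1' : k' ≠ 1 := by
        intro h; apply h3; rw [h] at hroot; linear_combination hroot
      set u : (ZMod p)ˣ := Units.mk0 k' hk'0 with hu
      have hu3 : u ^ 3 = 1 := by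
        ext
        simp only [Units.val_pow_eq_pow_val, Units.val_mk0, Units.val_one, hu]
        linear_combination (k' - 1) * hroot
      have huord : orderOf u = 3 := by
        have hdvd : orderOf u ∣ 3 := orderOf_dvd_of_pow_eq_one hu3
        rcases (Nat.prime_three.eq_one_or_self_of_dvd _ hdvd) with h | h
        · exfalso
          have hu1 : u = 1 := orderOf_eq_one_iff.mp h
          apply hk'1'
          have := congrArg (Units.val) hu1
          simpa [hu] using this
        · exact h
      have hdvdcard : 3 ∣ Fintype.card (ZMod p)ˣ := huord ▸ orderOf_dvd_card
      rw [ZMod.card_units] at hdvdcard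
      omega
    · intro hmod
      haveI : Fact (Nat.Prime 3) := ⟨Nat.prime_three⟩
      have h3dvd : 3 ∣ Fintype.card (ZMod p)ˣ := by
        rw [ZMod.card_units]; omega
      obtain ⟨u, hu⟩ := exists_prime_orderOf_dvd_card 3 h3dvd
      refine ⟨(u : ZMod p), Units.ne_zero u, ?_, ?_⟩
      · intro hneg
        have hu3 : (u : ZMod p) ^ 3 = 1 := by
          rw [← Units.val_pow_eq_pow_val, ← hu, pow_orderOf_eq_one, Units.val_one]
        rw [hneg] at hu3
        apply h2
        linear_combination -hu3
      · have hu3 : (u : ZMod p) ^ 3 = 1 := by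
          rw [← Units.val_pow_eq_pow_val, ← hu, pow_orderOf_eq_one, Units.val_one]
        have hne1 : (u : ZMod p) ≠ 1 := by
          intro h
          have : u = 1 := Units.ext h
          rw [this, orderOf_one] at hu
          omega
        have hfac : ((u : ZMod p) - 1) * ((u : ZMod p) ^ 2 + (u : ZMod p) + 1) = 0 := by
          linear_combination hu3
        rcases mul_eq_zero.mp hfac with h | h
        · exact absurd (by linear_combination h) hne1
        · exact h
end

section
/- Let p > 3 be a prime. Then Ω_1^p = {1, -2, -2⁻¹} and this set has cardinality 3; moreover, for any k ∈ ℤ/pℤ with k ≠ 0 and k ≠ -1, the set Ω_k^p has cardinality 3 if and only if Ω_k^p = Ω_1^p. -/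
/-!
The six maps `k ↦ k, -1 - k, k⁻¹, -1 - k⁻¹, -(k + 1)⁻¹, (k + 1)⁻¹ - 1` form a group isomorphic
to `S₃`, generated by `k ↦ -1 - k` and `k ↦ k⁻¹`, and `Ω_k` is the orbit of `k`. Two of the six
values coincide exactly when `k` is fixed by a nontrivial element: the three involutions fix
`-2⁻¹`, `1` and `-2` (besides the excluded `0` and `-1`), which all lie in the orbit `Ω_1`, and the
two 3-cycles fix the roots of `k² + k + 1`, whose orbit has only two elements. Every other `k`
has an orbit of size six.
-/

theorem ZMod.natCast_ne_zero_of_pos_of_lt {p n : ℕ} (h0 : 0 < n) (hn : n < p) :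
    (n : ZMod p) ≠ 0 := by
  rw [Ne, ZMod.natCast_eq_zero_iff]
  exact Nat.not_dvd_of_pos_of_lt h0 hn

section

variable {p : ℕ} [Fact p.Prime]

theorem Omega_one : Omega p 1 = {1, -2, -2⁻¹} := by
  ext x
  simp only [Omega, Finset.mem_insert, Finset.mem_singleton]
  grind

theorem card_Omega_one (h2 : (2 : ZMod p) ≠ 0) (h3 : (3 : ZMod p) ≠ 0) :
    (Omega p 1).card = 3 := by
  rw [Omega_one, Finset.card_eq_three]
  refine ⟨1, -2, -2⁻¹, ?_, ?_, ?_, rfl⟩ <;> grind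

theorem Omega_neg_one_sub (k : ZMod p) : Omega p (-1 - k) = Omega p k := by
  ext x
  simp only [Omega, Finset.mem_insert, Finset.mem_singleton]
  grind

theorem Omega_inv {k : ZMod p} (hk0 : k ≠ 0) (hk1 : k ≠ -1) : Omega p k⁻¹ = Omega p k := by
  ext x
  simp only [Omega, Finset.mem_insert, Finset.mem_singleton]
  grind

theorem Omega_eq_Omega_one_of_mem {k : ZMod p} (h2 : (2 : ZMod p) ≠ 0) (hk : k ∈ Omega p 1) :
    Omega p k = Omega p 1 := by
  have h_neg_two : Omega p (-2) = Omega p 1 := by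
    rw [← Omega_neg_one_sub, show (-1 - -2 : ZMod p) = 1 by ring]
  simp only [Omega_one, Finset.mem_insert, Finset.mem_singleton] at hk
  rcases hk with rfl | rfl | rfl
  · rfl
  · exact h_neg_two
  · rw [← inv_neg, Omega_inv (neg_ne_zero.mpr h2) (by grind), h_neg_two]

theorem card_Omega_le_two {k : ZMod p} (hk : k ^ 2 + k + 1 = 0) : (Omega p k).card ≤ 2 := by
  have h_sub : Omega p k ⊆ {k, -1 - k} := by
    intro x
    simp only [Omega, Finset.mem_insert, Finset.mem_singleton]
    grind
  exact (Finset.card_le_card h_sub).trans Finset.card_le_two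

theorem card_Omega_eq_six {k : ZMod p} (hk0 : k ≠ 0) (hk1 : k ≠ -1) (hk2 : k ≠ 1) (hk3 : k ≠ -2)
    (hk4 : 2 * k + 1 ≠ 0) (hq : k ^ 2 + k + 1 ≠ 0) : (Omega p k).card = 6 := by
  rw [Omega, Finset.card_insert_of_notMem, Finset.card_insert_of_notMem,
    Finset.card_insert_of_notMem, Finset.card_insert_of_notMem, Finset.card_insert_of_notMem,
    Finset.card_singleton] <;>
  simp only [Finset.mem_insert, Finset.mem_singleton, not_or] <;>
  grind

end

theorem stmt_3 (p : ℕ) [Fact p.Prime] (hp3 : 3 < p) :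
    Omega p 1 = ({1, -2, -2⁻¹} : Finset (ZMod p)) ∧
    (Omega p 1).card = 3 ∧
    (∀ k : ZMod p, k ≠ 0 → k ≠ -1 →
      ((Omega p k).card = 3 ↔ Omega p k = Omega p 1)) := by
  have h2 : (2 : ZMod p) ≠ 0 := by
    exact_mod_cast ZMod.natCast_ne_zero_of_pos_of_lt two_pos (by omega)
  have h3 : (3 : ZMod p) ≠ 0 := by
    exact_mod_cast ZMod.natCast_ne_zero_of_pos_of_lt three_pos hp3
  refine ⟨Omega_one, card_Omega_one h2 h3, fun k hk0 hk1 => ⟨fun h_card => ?_, fun h => ?_⟩⟩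
  · by_cases hq : k ^ 2 + k + 1 = 0
    · have := card_Omega_le_two hq
      omega
    by_contra h_ne
    have h_not_mem : k ∉ Omega p 1 := fun hk => h_ne (Omega_eq_Omega_one_of_mem h2 hk)
    simp only [Omega_one, Finset.mem_insert, Finset.mem_singleton, not_or] at h_not_mem
    obtain ⟨hk2, hk3, hk4⟩ := h_not_mem
    have h_six := card_Omega_eq_six hk0 hk1 hk2 hk3 (fun h => hk4 (by grind)) hq
    omega
  · rw [h, card_Omega_one h2 h3]
end

section
/- Let p > 3 be a prime and let k ∈ ℤ/pℤ with k ≠ 0 and k ≠ -1. If k² + k + 1 ≠ 0 in ℤ/pℤ and Ω_k^p ≠ Ω_1^p, then the set Ω_k^p has cardinality exactly 6. -/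
theorem card_anharmonic_eq_six {F : Type*} [Field F] [DecidableEq F] {k : F} (hk0 : k ≠ 0)
    (hk1 : k + 1 ≠ 0) (hk_one : k ≠ 1) (hk2 : k + 2 ≠ 0) (hhalf : 2 * k + 1 ≠ 0)
    (hcube : k ^ 2 + k + 1 ≠ 0) :
    ({k, -1 - k, k⁻¹, -1 - k⁻¹, -(k + 1)⁻¹, (k + 1)⁻¹ - 1} : Finset F).card = 6 := by
  have hnodup : [k, -1 - k, k⁻¹, -1 - k⁻¹, -(k + 1)⁻¹, (k + 1)⁻¹ - 1].Nodup := by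
    simp only [List.nodup_cons, List.mem_cons, List.not_mem_nil, List.nodup_nil, or_false,
      not_or, not_false_eq_true, and_true]
    refine ⟨⟨?_, ?_, ?_, ?_, ?_⟩, ⟨?_, ?_, ?_, ?_⟩, ⟨?_, ?_, ?_⟩, ⟨?_, ?_⟩, ?_⟩ <;> grind
  simpa using List.toFinset_card_of_nodup hnodup

theorem Omega_neg_two (p : ℕ) [Fact p.Prime] : Omega p (-2) = Omega p 1 := by
  ext x
  simp only [Omega, Finset.mem_insert, Finset.mem_singleton]
  grind

theorem Omega_eq_Omega_one_of_two_mul_add_one_eq_zero {p : ℕ} [Fact p.Prime] {k : ZMod p}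
    (hk : 2 * k + 1 = 0) : Omega p k = Omega p 1 := by
  have h2 : (2 : ZMod p) ≠ 0 := by
    rintro h
    simp [h] at hk
  ext x
  simp only [Omega, Finset.mem_insert, Finset.mem_singleton]
  grind

theorem stmt_4_general (p : ℕ) [Fact p.Prime] (k : ZMod p)
    (hk0 : k ≠ 0) (hk1 : k ≠ -1)
    (h1 : k ^ 2 + k + 1 ≠ 0) (h2 : Omega p k ≠ Omega p 1) :
    (Omega p k).card = 6 := by
  have hk1' : k + 1 ≠ 0 := fun h => hk1 (eq_neg_of_add_eq_zero_left h)
  have hk_one : k ≠ 1 := by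
    rintro rfl
    exact h2 rfl
  have hk2 : k + 2 ≠ 0 := fun h => h2 (by rw [eq_neg_of_add_eq_zero_left h, Omega_neg_two])
  have hhalf : 2 * k + 1 ≠ 0 := fun h => h2 (Omega_eq_Omega_one_of_two_mul_add_one_eq_zero h)
  exact card_anharmonic_eq_six hk0 hk1' hk_one hk2 hhalf h1

theorem stmt_4 (p : ℕ) [Fact p.Prime] (hp3 : 3 < p) (k : ZMod p)
    (hk0 : k ≠ 0) (hk1 : k ≠ -1)
    (h1 : k ^ 2 + k + 1 ≠ 0) (h2 : Omega p k ≠ Omega p 1) :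
    (Omega p k).card = 6 :=
  stmt_4_general p k hk0 hk1 h1 h2
end

section
/- Let p > 3 be a prime, let Γ be the group presented as ⟨x, y : x^p = y^p = (xy)^p = 1⟩, and let k be an integer with 1 ≤ k ≤ p-2. Let φ : Γ → ℤ/pℤ be the (well-defined) group homomorphism to the additive group ℤ/pℤ determined by φ(x) = 1 and φ(y) = k. Then φ is surjective and its kernel is exactly the subgroup of Γ generated by the p elements x^{jk} (x^k y⁻¹) x^{-jk} for j = 0, 1, ..., p-1. -/
/-- The relations of the presentation `⟨x, y : x^p = y^p = (xy)^p = 1⟩`. -/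
def rels2 (p : ℕ) : Set (FreeGroup (Fin 2)) :=
  {FreeGroup.of 0 ^ p, FreeGroup.of 1 ^ p, (FreeGroup.of 0 * FreeGroup.of 1) ^ p}

/-- The group `Γ = ⟨x, y : x^p = y^p = (xy)^p = 1⟩`. -/
def Gamma2 (p : ℕ) : Type := PresentedGroup (rels2 p)

instance (p : ℕ) : Group (Gamma2 p) := by unfold Gamma2; infer_instance

/-- The generator `x` of `Γ`. -/
def xg (p : ℕ) : Gamma2 p := PresentedGroup.of 0

/-- The generator `y` of `Γ`. -/
def yg (p : ℕ) : Gamma2 p := PresentedGroup.of 1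

/-!
Write `t = x^k y⁻¹`. Since `k` is invertible mod `p` and `x^p = 1`, the powers `x^(jk)`, `j < p`, run
through all powers of `x`, so the given generators are the conjugates of `t` by `⟨x⟩`. Their closure
`N` is therefore normalized by `x`, and by `y = t⁻¹ x^k`, hence is normal. Modulo `N` we have
`y ≡ x^k`, so every `g` is `x^m n` with `n ∈ N`. As `N ≤ ker φ` and `φ(x^m) = m`, `g ∈ ker φ` forces
`p ∣ m`, whence `x^m = 1` and `g ∈ N`.
-/

open Subgroup

section Conjugates

variable {G : Type*} [Group G]

theorem mem_normalizer_range_conj_zpow (x t : G) :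
    x ∈ normalizer (Set.range fun m : ℤ => x ^ m * t * (x ^ m)⁻¹) := by
  rw [mem_normalizer_iff_conj_image_eq, ← Set.range_comp]
  convert (Equiv.addRight (1 : ℤ)).surjective.range_comp _ using 2
  ext m
  simp only [Function.comp_apply, MulAut.conj_apply, Equiv.coe_addRight, zpow_add_one]
  group

theorem setOf_conj_pow_mul_eq_range_conj_zpow {x : G} {p k : ℕ} [NeZero p] (hx : x ^ p = 1)
    (hk : k.Coprime p) (t : G) :
    {g | ∃ j < p, g = x ^ (j * k) * t * (x ^ (j * k))⁻¹} =
      Set.range fun m : ℤ => x ^ m * t * (x ^ m)⁻¹ := by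
  ext g
  constructor
  · rintro ⟨j, -, rfl⟩
    exact ⟨(j * k : ℕ), by simp only [zpow_natCast]⟩
  · rintro ⟨m, rfl⟩
    let u := ZMod.unitOfCoprime k hk
    refine ⟨((m : ZMod p) * ↑u⁻¹).val, ZMod.val_lt _, ?_⟩
    suffices h : x ^ (((m : ZMod p) * ↑u⁻¹).val * k : ℕ) = x ^ m by rw [h]
    rw [← zpow_natCast, zpow_eq_zpow_iff_modEq]
    refine Int.ModEq.of_dvd (Int.natCast_dvd_natCast.2 (orderOf_dvd_of_pow_eq_one hx)) ?_
    rw [← ZMod.intCast_eq_intCast_iff]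
    push_cast
    rw [ZMod.natCast_zmod_val, mul_assoc, ← ZMod.coe_unitOfCoprime k hk, Units.inv_mul, mul_one]

theorem normal_closure_range_conj_zpow {x y : G} (hxy : closure {x, y} = ⊤) (k : ℤ) :
    (closure (Set.range fun m : ℤ => x ^ m * (x ^ k * y⁻¹) * (x ^ m)⁻¹)).Normal := by
  set N := closure (Set.range fun m : ℤ => x ^ m * (x ^ k * y⁻¹) * (x ^ m)⁻¹)
  have hx : x ∈ normalizer (N : Set G) :=
    normalizer_le_normalizer_closure _ (mem_normalizer_range_conj_zpow _ _)
  have ht : x ^ k * y⁻¹ ∈ N := subset_closure ⟨0, by simp⟩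
  have hy : y ∈ normalizer (N : Set G) := by
    rw [show y = (x ^ k * y⁻¹)⁻¹ * x ^ k by group]
    exact mul_mem (inv_mem (le_normalizer ht)) (zpow_mem hx k)
  rw [← normalizer_eq_top_iff, eq_top_iff, ← hxy, closure_le]
  rintro g (rfl | rfl)
  exacts [hx, hy]

theorem exists_zpow_inv_mul_mem {x y : G} (hxy : closure {x, y} = ⊤) {k : ℤ} (N : Subgroup G)
    [N.Normal] (hN : x ^ k * y⁻¹ ∈ N) (g : G) : ∃ m : ℤ, (x ^ m)⁻¹ * g ∈ N := by
  have hyx : (y : G ⧸ N) = (x : G ⧸ N) ^ k := by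
    rw [← QuotientGroup.mk_zpow, QuotientGroup.eq]
    exact ‹N.Normal›.mem_comm hN
  have htop : zpowers (x : G ⧸ N) = ⊤ := by
    rw [eq_top_iff, ← map_top_of_surjective _ (QuotientGroup.mk'_surjective N), ← hxy,
      MonoidHom.map_closure, closure_le, Set.image_pair]
    rintro _ (rfl | rfl)
    · exact mem_zpowers _
    · rw [QuotientGroup.mk'_apply, hyx]
      exact zpow_mem (mem_zpowers _) k
  obtain ⟨m, hm⟩ := mem_zpowers_iff.1 (htop ▸ mem_top (g : G ⧸ N))
  exact ⟨m, QuotientGroup.eq.1 (by rw [QuotientGroup.mk_zpow, hm])⟩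

end Conjugates

theorem MonoidHom.ker_eq_of_exists_zpow_inv_mul_mem {G H : Type*} [Group G] [Group H]
    (φ : G →* H) {N : Subgroup G} {x : G} (hN : N ≤ φ.ker)
    (hdecomp : ∀ g, ∃ m : ℤ, (x ^ m)⁻¹ * g ∈ N) (hinj : ∀ m : ℤ, φ (x ^ m) = 1 → x ^ m = 1) :
    φ.ker = N := by
  refine le_antisymm (fun g hg => ?_) hN
  obtain ⟨m, hm⟩ := hdecomp g
  have hxm : x ^ m = 1 := by
    refine hinj m ?_
    have := hN hm
    rwa [MonoidHom.mem_ker, map_mul, map_inv, MonoidHom.mem_ker.1 hg, mul_one, inv_eq_one] at this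
  simpa [hxm] using hm

theorem xg_pow_self (p : ℕ) : xg p ^ p = 1 := by
  change PresentedGroup.mk _ (FreeGroup.of 0) ^ p = 1
  rw [← map_pow]
  exact PresentedGroup.one_of_mem (Or.inl rfl)

theorem closure_xg_yg (p : ℕ) : closure {xg p, yg p} = ⊤ := by
  have : ({xg p, yg p} : Set (Gamma2 p)) = Set.range (PresentedGroup.of : Fin 2 → Gamma2 p) := by
    ext g
    constructor
    · rintro (rfl | rfl)
      exacts [⟨0, rfl⟩, ⟨1, rfl⟩]
    · rintro ⟨i, rfl⟩
      fin_cases i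
      exacts [Or.inl rfl, Or.inr rfl]
  rw [this]
  exact PresentedGroup.closure_range_of _

theorem Gamma2.exists_hom {p : ℕ} {H : Type*} [Group H] {a b : H} (ha : a ^ p = 1) (hb : b ^ p = 1)
    (hab : (a * b) ^ p = 1) : ∃ φ : Gamma2 p →* H, φ (xg p) = a ∧ φ (yg p) = b := by
  have hrels : ∀ r ∈ rels2 p, FreeGroup.lift ![a, b] r = 1 := by
    rintro r (rfl | rfl | rfl) <;> simpa
  exact ⟨PresentedGroup.toGroup hrels, PresentedGroup.toGroup.of hrels,
    PresentedGroup.toGroup.of hrels⟩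

theorem stmt_7_general (p : ℕ) (hp : p.Prime) (k : ℕ)
    (hk1 : 1 ≤ k) (hk2 : k ≤ p - 2) :
    (∃ φ : Gamma2 p →* Multiplicative (ZMod p),
        φ (xg p) = Multiplicative.ofAdd (1 : ZMod p) ∧
        φ (yg p) = Multiplicative.ofAdd (k : ZMod p)) ∧
    (∀ φ : Gamma2 p →* Multiplicative (ZMod p),
        φ (xg p) = Multiplicative.ofAdd (1 : ZMod p) →
        φ (yg p) = Multiplicative.ofAdd (k : ZMod p) →
        Function.Surjective φ ∧
        φ.ker = Subgroup.closure
          {g : Gamma2 p | ∃ j : ℕ, j < p ∧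
            g = xg p ^ (j * k) * (xg p ^ k * (yg p)⁻¹) * (xg p ^ (j * k))⁻¹}) := by
  have : NeZero p := ⟨hp.ne_zero⟩
  have hk : k.Coprime p :=
    Nat.coprime_comm.1 (hp.coprime_iff_not_dvd.2 (Nat.not_dvd_of_pos_of_lt hk1 (by omega)))
  have hpow (z : Multiplicative (ZMod p)) : z ^ p = 1 := by
    rw [← ofAdd_toAdd z, ← ofAdd_nsmul, nsmul_eq_mul, ZMod.natCast_self, zero_mul, ofAdd_zero]
  refine ⟨Gamma2.exists_hom (hpow _) (hpow _) (hpow _), fun φ hx hy => ?_⟩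
  have hφx (m : ℤ) : φ (xg p ^ m) = Multiplicative.ofAdd (m : ZMod p) := by
    rw [map_zpow, hx, ← ofAdd_zsmul, zsmul_one]
  have ht : xg p ^ (k : ℤ) * (yg p)⁻¹ ∈ φ.ker := by
    rw [MonoidHom.mem_ker, map_mul, map_inv, hφx, hy, Int.cast_natCast, mul_inv_cancel]
  refine ⟨fun z => ?_, ?_⟩
  · obtain ⟨m, hm⟩ := ZMod.intCast_surjective (Multiplicative.toAdd z)
    exact ⟨xg p ^ m, by rw [hφx, hm, ofAdd_toAdd]⟩
  rw [setOf_conj_pow_mul_eq_range_conj_zpow (xg_pow_self p) hk, ← zpow_natCast (xg p) k]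
  set N := closure (Set.range fun m : ℤ => xg p ^ m * (xg p ^ (k : ℤ) * (yg p)⁻¹) * (xg p ^ m)⁻¹)
  have : N.Normal := normal_closure_range_conj_zpow (closure_xg_yg p) k
  have htN : xg p ^ (k : ℤ) * (yg p)⁻¹ ∈ N := subset_closure ⟨0, by simp⟩
  refine φ.ker_eq_of_exists_zpow_inv_mul_mem ?_
    (exists_zpow_inv_mul_mem (closure_xg_yg p) N htN) fun m hm => ?_
  · exact (closure_le _).2 fun _ ⟨m, hm⟩ => hm ▸ φ.normal_ker.conj_mem _ ht _
  · rw [hφx, ofAdd_eq_one, ZMod.intCast_zmod_eq_zero_iff_dvd] at hm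
    obtain ⟨c, rfl⟩ := hm
    rw [zpow_mul, zpow_natCast, xg_pow_self, one_zpow]

theorem stmt_7 (p : ℕ) (hp : p.Prime) (hp3 : 3 < p) (k : ℕ)
    (hk1 : 1 ≤ k) (hk2 : k ≤ p - 2) :
    (∃ φ : Gamma2 p →* Multiplicative (ZMod p),
        φ (xg p) = Multiplicative.ofAdd (1 : ZMod p) ∧
        φ (yg p) = Multiplicative.ofAdd (k : ZMod p)) ∧
    (∀ φ : Gamma2 p →* Multiplicative (ZMod p),
        φ (xg p) = Multiplicative.ofAdd (1 : ZMod p) →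
        φ (yg p) = Multiplicative.ofAdd (k : ZMod p) →
        Function.Surjective φ ∧
        φ.ker = Subgroup.closure
          {g : Gamma2 p | ∃ j : ℕ, j < p ∧
            g = xg p ^ (j * k) * (xg p ^ k * (yg p)⁻¹) * (xg p ^ (j * k))⁻¹}) :=
  stmt_7_general p hp k hk1 hk2
end

section
/- Let p be an odd prime. For every (i,j) ∈ Σ_p, the set ^eΛ_{(i,j)}^p is contained in Σ_p, and for every (i',j') ∈ ^eΛ_{(i,j)}^p one has ^eΛ_{(i',j')}^p = ^eΛ_{(i,j)}^p. Consequently the sets ^eΛ_{(i,j)}^p, as (i,j) ranges over Σ_p, form a partition of Σ_p. -/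
/-- `Σ_p := {(i,j) ∈ (ℤ/pℤ)² : i ≠ 0, j ≠ 0, i+j+1 ≠ 0}`. -/
def SigmaP (p : ℕ) : Set (ZMod p × ZMod p) :=
  {ij | ij.1 ≠ 0 ∧ ij.2 ≠ 0 ∧ ij.1 + ij.2 + 1 ≠ 0}

/-- The set `^eΛ_{(i,j)}^p`, where `k := -(i+j+1)`. -/
def eLam (p : ℕ) (ij : ZMod p × ZMod p) : Finset (ZMod p × ZMod p) :=
  let i := ij.1
  let j := ij.2
  let k := -(i + j + 1)
  {(i, j), (j, k), (k, i), (i⁻¹ * j, i⁻¹), (i⁻¹, i⁻¹ * k), (i⁻¹ * k, i⁻¹ * j),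
   (j⁻¹, i * j⁻¹), (i * j⁻¹, j⁻¹ * k), (j⁻¹ * k, j⁻¹),
   (j * k⁻¹, i * k⁻¹), (i * k⁻¹, k⁻¹), (k⁻¹, j * k⁻¹)}

section
variable (p : ℕ) [Fact p.Prime]

lemma rot2 (a b c : ZMod p) (h : c = -(a + b + 1)) :
    eLam p (b, c) = eLam p (a, b) := by
  subst h
  have h : -(b + -(a+b+1) + 1) = a := by ring
  ext x
  simp only [eLam, Finset.mem_insert, Finset.mem_singleton, h, mul_comm]
  tauto

set_option maxHeartbeats 1000000 in
lemma sig (i j : ZMod p) (hi : i ≠ 0) (hj : j ≠ 0) (hk : i + j + 1 ≠ 0) :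
    eLam p (i⁻¹ * j, i⁻¹) = eLam p (i, j) := by
  have g1 : -(i⁻¹ * j + i⁻¹ + 1) = i⁻¹ * -(i + j + 1) := by
    linear_combination inv_mul_cancel₀ hi
  have g2 : (i⁻¹ * j)⁻¹ = i * j⁻¹ := by rw [mul_inv, inv_inv]
  have g3 : (i⁻¹ : ZMod p)⁻¹ = i := inv_inv i
  have g4 : (i⁻¹ * -(i + j + 1))⁻¹ = i * (-(i + j + 1))⁻¹ := by rw [mul_inv, inv_inv]
  have g5 : i * j⁻¹ * i⁻¹ = j⁻¹ := by
    rw [mul_comm i j⁻¹, mul_assoc, mul_inv_cancel₀ hi, mul_one]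
  have g6 : i⁻¹ * j * i = j := by
    rw [mul_comm, ← mul_assoc, mul_inv_cancel₀ hi, one_mul]
  have g7 : i * (i⁻¹ * -(i + j + 1)) = -(i + j + 1) := by
    rw [← mul_assoc, mul_inv_cancel₀ hi, one_mul]
  have g8 : i * j⁻¹ * (i⁻¹ * -(i + j + 1)) = j⁻¹ * -(i + j + 1) := by
    rw [mul_mul_mul_comm, mul_inv_cancel₀ hi, one_mul]
  have g9 : i⁻¹ * (i * (-(i + j + 1))⁻¹) = (-(i + j + 1))⁻¹ := by
    rw [← mul_assoc, inv_mul_cancel₀ hi, one_mul]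
  have g10 : i⁻¹ * j * (i * (-(i + j + 1))⁻¹) = j * (-(i + j + 1))⁻¹ := by
    rw [mul_mul_mul_comm, inv_mul_cancel₀ hi, one_mul]
  ext x
  simp only [eLam, Finset.mem_insert, Finset.mem_singleton, g1, g2, g3, g4, g5, g6, g7,
    g8, g9, g10]
  tauto

lemma memS (i j : ZMod p) (hi : i ≠ 0) (hj : j ≠ 0) (hk : i + j + 1 ≠ 0) :
    ∀ x ∈ eLam p (i, j), x ∈ SigmaP p := by
  have hK : -(i + j + 1) ≠ 0 := neg_ne_zero.mpr hk
  have hii : (i : ZMod p)⁻¹ ≠ 0 := inv_ne_zero hi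
  have hji : (j : ZMod p)⁻¹ ≠ 0 := inv_ne_zero hj
  have hKi : (-(i + j + 1) : ZMod p)⁻¹ ≠ 0 := inv_ne_zero hK
  intro x hx
  simp only [eLam, Finset.mem_insert, Finset.mem_singleton] at hx
  rcases hx with rfl | rfl | rfl | rfl | rfl | rfl | rfl | rfl | rfl | rfl | rfl | rfl
  · exact ⟨hi, hj, hk⟩
  · refine ⟨hj, hK, ?_⟩
    show j + -(i + j + 1) + 1 ≠ 0
    rw [show j + -(i + j + 1) + 1 = -i by ring]
    exact neg_ne_zero.mpr hi
  · refine ⟨hK, hi, ?_⟩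
    show -(i + j + 1) + i + 1 ≠ 0
    rw [show -(i + j + 1) + i + 1 = -j by ring]
    exact neg_ne_zero.mpr hj
  · refine ⟨mul_ne_zero hii hj, hii, ?_⟩
    show i⁻¹ * j + i⁻¹ + 1 ≠ 0
    rw [show i⁻¹ * j + i⁻¹ + 1 = i⁻¹ * (i + j + 1) by linear_combination -inv_mul_cancel₀ hi]
    exact mul_ne_zero hii hk
  · refine ⟨hii, mul_ne_zero hii hK, ?_⟩
    show i⁻¹ + i⁻¹ * -(i + j + 1) + 1 ≠ 0
    rw [show i⁻¹ + i⁻¹ * -(i + j + 1) + 1 = -(i⁻¹ * j) by linear_combination -inv_mul_cancel₀ hi]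
    exact neg_ne_zero.mpr (mul_ne_zero hii hj)
  · refine ⟨mul_ne_zero hii hK, mul_ne_zero hii hj, ?_⟩
    show i⁻¹ * -(i + j + 1) + i⁻¹ * j + 1 ≠ 0
    rw [show i⁻¹ * -(i + j + 1) + i⁻¹ * j + 1 = -i⁻¹ by linear_combination -inv_mul_cancel₀ hi]
    exact neg_ne_zero.mpr hii
  · refine ⟨hji, mul_ne_zero hi hji, ?_⟩
    show j⁻¹ + i * j⁻¹ + 1 ≠ 0
    rw [show j⁻¹ + i * j⁻¹ + 1 = j⁻¹ * (i + j + 1) by linear_combination -inv_mul_cancel₀ hj]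
    exact mul_ne_zero hji hk
  · refine ⟨mul_ne_zero hi hji, mul_ne_zero hji hK, ?_⟩
    show i * j⁻¹ + j⁻¹ * -(i + j + 1) + 1 ≠ 0
    rw [show i * j⁻¹ + j⁻¹ * -(i + j + 1) + 1 = -j⁻¹ by linear_combination -inv_mul_cancel₀ hj]
    exact neg_ne_zero.mpr hji
  · refine ⟨mul_ne_zero hji hK, hji, ?_⟩
    show j⁻¹ * -(i + j + 1) + j⁻¹ + 1 ≠ 0
    rw [show j⁻¹ * -(i + j + 1) + j⁻¹ + 1 = -(i * j⁻¹) by linear_combination -inv_mul_cancel₀ hj]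
    exact neg_ne_zero.mpr (mul_ne_zero hi hji)
  · refine ⟨mul_ne_zero hj hKi, mul_ne_zero hi hKi, ?_⟩
    show j * (-(i + j + 1))⁻¹ + i * (-(i + j + 1))⁻¹ + 1 ≠ 0
    rw [show j * (-(i + j + 1))⁻¹ + i * (-(i + j + 1))⁻¹ + 1 = -(-(i + j + 1))⁻¹ by
      linear_combination -inv_mul_cancel₀ hK]
    exact neg_ne_zero.mpr hKi
  · refine ⟨mul_ne_zero hi hKi, hKi, ?_⟩
    show i * (-(i + j + 1))⁻¹ + (-(i + j + 1))⁻¹ + 1 ≠ 0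
    rw [show i * (-(i + j + 1))⁻¹ + (-(i + j + 1))⁻¹ + 1 = -(j * (-(i + j + 1))⁻¹) by
      linear_combination -inv_mul_cancel₀ hK]
    exact neg_ne_zero.mpr (mul_ne_zero hj hKi)
  · refine ⟨hKi, mul_ne_zero hj hKi, ?_⟩
    show (-(i + j + 1))⁻¹ + j * (-(i + j + 1))⁻¹ + 1 ≠ 0
    rw [show (-(i + j + 1))⁻¹ + j * (-(i + j + 1))⁻¹ + 1 = -(i * (-(i + j + 1))⁻¹) by
      linear_combination -inv_mul_cancel₀ hK]
    exact neg_ne_zero.mpr (mul_ne_zero hi hKi)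

set_option maxHeartbeats 1000000 in
lemma eq_all (i j : ZMod p) (hi : i ≠ 0) (hj : j ≠ 0) (hk : i + j + 1 ≠ 0) :
    ∀ x ∈ eLam p (i, j), eLam p x = eLam p (i, j) := by
  have hK : -(i + j + 1) ≠ 0 := neg_ne_zero.mpr hk
  have hii : (i : ZMod p)⁻¹ ≠ 0 := inv_ne_zero hi
  have e2 : eLam p (j, -(i + j + 1)) = eLam p (i, j) := rot2 p i j _ rfl
  have e3 : eLam p (-(i + j + 1), i) = eLam p (i, j) :=
    (rot2 p j (-(i + j + 1)) i (by ring)).trans e2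
  have e4 : eLam p (i⁻¹ * j, i⁻¹) = eLam p (i, j) := sig p i j hi hj hk
  have e5 : eLam p (i⁻¹, i⁻¹ * -(i + j + 1)) = eLam p (i, j) :=
    (rot2 p (i⁻¹ * j) i⁻¹ (i⁻¹ * -(i + j + 1))
      (by linear_combination -inv_mul_cancel₀ hi)).trans e4
  have e6 : eLam p (i⁻¹ * -(i + j + 1), i⁻¹ * j) = eLam p (i, j) :=
    (rot2 p i⁻¹ (i⁻¹ * -(i + j + 1)) (i⁻¹ * j)
      (by linear_combination -inv_mul_cancel₀ hi)).trans e5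
  have ha : i⁻¹ * j ≠ 0 := mul_ne_zero hii hj
  have hb : i⁻¹ * j + i⁻¹ + 1 ≠ 0 := by
    rw [show i⁻¹ * j + i⁻¹ + 1 = i⁻¹ * (i + j + 1) by linear_combination -inv_mul_cancel₀ hi]
    exact mul_ne_zero hii hk
  have sig2 := sig p (i⁻¹ * j) i⁻¹ ha hii hb
  rw [show (i⁻¹ * j)⁻¹ * i⁻¹ = j⁻¹ by
        rw [mul_inv, inv_inv, mul_comm i j⁻¹, mul_assoc, mul_inv_cancel₀ hi, mul_one],
      show ((i⁻¹ : ZMod p) * j)⁻¹ = i * j⁻¹ by rw [mul_inv, inv_inv]] at sig2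
  have e7 : eLam p (j⁻¹, i * j⁻¹) = eLam p (i, j) := sig2.trans e4
  have e8 : eLam p (i * j⁻¹, j⁻¹ * -(i + j + 1)) = eLam p (i, j) :=
    (rot2 p j⁻¹ (i * j⁻¹) (j⁻¹ * -(i + j + 1))
      (by linear_combination -inv_mul_cancel₀ hj)).trans e7
  have e9 : eLam p (j⁻¹ * -(i + j + 1), j⁻¹) = eLam p (i, j) :=
    (rot2 p (i * j⁻¹) (j⁻¹ * -(i + j + 1)) j⁻¹
      (by linear_combination -inv_mul_cancel₀ hj)).trans e8
  have hc : -(i + j + 1) + i + 1 ≠ 0 := by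
    rw [show -(i + j + 1) + i + 1 = -j by ring]
    exact neg_ne_zero.mpr hj
  have sig3 := sig p (-(i + j + 1)) i hK hi hc
  rw [show (-(i + j + 1) : ZMod p)⁻¹ * i = i * (-(i + j + 1))⁻¹ from mul_comm _ _] at sig3
  have e11 : eLam p (i * (-(i + j + 1))⁻¹, (-(i + j + 1))⁻¹) = eLam p (i, j) :=
    sig3.trans e3
  have e12 : eLam p ((-(i + j + 1))⁻¹, j * (-(i + j + 1))⁻¹) = eLam p (i, j) :=
    (rot2 p (i * (-(i + j + 1))⁻¹) ((-(i + j + 1))⁻¹) (j * (-(i + j + 1))⁻¹)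
      (by linear_combination -inv_mul_cancel₀ hK)).trans e11
  have e10 : eLam p (j * (-(i + j + 1))⁻¹, i * (-(i + j + 1))⁻¹) = eLam p (i, j) :=
    (rot2 p ((-(i + j + 1))⁻¹) (j * (-(i + j + 1))⁻¹) (i * (-(i + j + 1))⁻¹)
      (by linear_combination -inv_mul_cancel₀ hK)).trans e12
  intro x hx
  simp only [eLam, Finset.mem_insert, Finset.mem_singleton] at hx
  rcases hx with rfl | rfl | rfl | rfl | rfl | rfl | rfl | rfl | rfl | rfl | rfl | rfl
  exacts [rfl, e2, e3, e4, e5, e6, e7, e8, e9, e10, e11, e12]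

end

theorem stmt_9 (p : ℕ) [Fact p.Prime] (hodd : Odd p) :
    ∀ ij ∈ SigmaP p,
      (∀ x ∈ eLam p ij, x ∈ SigmaP p) ∧
      (∀ x ∈ eLam p ij, eLam p x = eLam p ij) ∧
      ij ∈ eLam p ij ∧
      (∀ ij' ∈ SigmaP p, eLam p ij = eLam p ij' ∨ Disjoint (eLam p ij) (eLam p ij')) := by
  intro ij hij
  obtain ⟨i, j⟩ := ij
  obtain ⟨hi, hj, hk⟩ := hij
  refine ⟨memS p i j hi hj hk, eq_all p i j hi hj hk, by simp [eLam], ?_⟩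
  intro ij' hij'
  obtain ⟨i', j'⟩ := ij'
  obtain ⟨hi', hj', hk'⟩ := hij'
  by_cases hd : Disjoint (eLam p (i, j)) (eLam p (i', j'))
  · exact Or.inr hd
  · left
    obtain ⟨x, hx1, hx2⟩ := Finset.not_disjoint_iff.mp hd
    exact (eq_all p i j hi hj hk x hx1).symm.trans (eq_all p i' j' hi' hj' hk' x hx2)
end

section
/- Let p > 3 be a prime. Then ^eΛ_{(1,1)}^p = {(1,1), (1,-3), (-3,1), (-3⁻¹,-3⁻¹)} and this set has cardinality exactly 4. -/
/-- With `i = j = 1` we get `k = -3`, and the twelve pairs collapse onto four. -/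
theorem eLam_one_one (p : ℕ) [Fact p.Prime] :
    eLam p (1, 1) = ({(1, 1), (1, -3), (-3, 1), (-3⁻¹, -3⁻¹)} : Finset (ZMod p × ZMod p)) := by
  ext x
  simp only [eLam, Finset.mem_insert, Finset.mem_singleton]
  norm_num [inv_neg]
  tauto

section Field

variable {K : Type*} [Field K]

theorem one_ne_neg_three (h2 : (2 : K) ≠ 0) : (1 : K) ≠ -3 := by
  intro h
  exact mul_ne_zero h2 h2 (by linear_combination h)

theorem one_ne_neg_inv_three (h2 : (2 : K) ≠ 0) : (1 : K) ≠ -3⁻¹ := by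
  intro h
  have h3 : (3 : K) = -1 := by
    rw [← inv_inv (3 : K), neg_eq_iff_eq_neg.mp h.symm, inv_neg, inv_one]
  exact one_ne_neg_three h2 (by rw [h3, neg_neg])

theorem card_pairs_one_neg_three [DecidableEq K] (h2 : (2 : K) ≠ 0) :
    ({(1, 1), (1, -3), (-3, 1), (-3⁻¹, -3⁻¹)} : Finset (K × K)).card = 4 := by
  have h13 := one_ne_neg_three h2
  have h13' := one_ne_neg_inv_three h2
  rw [Finset.card_insert_of_notMem, Finset.card_insert_of_notMem,
    Finset.card_insert_of_notMem, Finset.card_singleton] <;>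
    simp [Prod.ext_iff, h13, h13', h13.symm]

end Field

theorem ZMod.two_ne_zero_of_two_lt {p : ℕ} (hp : 2 < p) : (2 : ZMod p) ≠ 0 := by
  intro h
  have hdvd : p ∣ 2 := (ZMod.natCast_eq_zero_iff 2 p).mp (by exact_mod_cast h)
  exact absurd (Nat.le_of_dvd two_pos hdvd) (by omega)

theorem stmt_10 (p : ℕ) [Fact p.Prime] (hp3 : 3 < p) :
    eLam p (1, 1) = ({(1, 1), (1, -3), (-3, 1), (-3⁻¹, -3⁻¹)} : Finset (ZMod p × ZMod p)) ∧
    (eLam p (1, 1)).card = 4 := by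
  rw [eLam_one_one]
  exact ⟨rfl, card_pairs_one_neg_three (ZMod.two_ne_zero_of_two_lt (p := p) (by omega))⟩
end

section
/- Let p be an odd prime. The number of distinct sets among the Λ_{(i,j)}^p, as (i,j) ranges over Σ_p, is exactly (p² + 3)/4 when p > 3, and is exactly 3 when p = 3. -/
/-- The indexed set `Λ_{(i,j)}^p ⊆ (ℤ/pℤ)² × {1,2,3}`, where `k := -(i+j+1)`. -/
def Lam (p : ℕ) (ij : ZMod p × ZMod p) : Finset ((ZMod p × ZMod p) × ℕ) :=
  let i := ij.1
  let j := ij.2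
  let k := -(i + j + 1)
  {((i, j), 1), ((j, k), 3), ((k, i), 2),
   ((i⁻¹ * j, i⁻¹), 2), ((i⁻¹, i⁻¹ * k), 1), ((i⁻¹ * k, i⁻¹ * j), 3),
   ((j⁻¹, i * j⁻¹), 3), ((i * j⁻¹, j⁻¹ * k), 2), ((j⁻¹ * k, j⁻¹), 1),
   ((j * k⁻¹, i * k⁻¹), 1), ((i * k⁻¹, k⁻¹), 3), ((k⁻¹, j * k⁻¹), 2)}

/-- `Σ_p` as a finset. -/
def SigmaF (p : ℕ) [NeZero p] : Finset (ZMod p × ZMod p) :=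
  Finset.univ.filter (fun ij => ij.1 ≠ 0 ∧ ij.2 ≠ 0 ∧ ij.1 + ij.2 + 1 ≠ 0)

/-!
Write `k = -(i + j + 1)`. The points of `Σ_p` are the projective points `[i : j : k : 1]` with
nonzero coordinates on the plane `x₁ + x₂ + x₃ + x₄ = 0`, and the double transpositions of the four
coordinates give an action of the Klein four-group on `Σ_p`, generated by the involutions
`invFst (i, j) = (i⁻¹, i⁻¹ k)` and `invSnd (i, j) = (j⁻¹ k, j⁻¹)`. The set `Λ_{(i,j)}` is the union,
over the orbit of `(i, j)`, of the triples `{((a, b), 1), ((b, c), 3), ((c, a), 2)}` with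
`c = -(a + b + 1)`; its entries labelled `1` are the orbit itself, so `Λ` separates orbits.
The three involutions are conjugate under the symmetries `(i, j) ↦ (j, i)` and `(i, j) ↦ (j, k)`
of `Σ_p` and each fixes exactly `p` points, while `|Σ_p| = p² - 3p + 3`. Burnside's lemma gives
`4 · #orbits = p² + 3`.
-/

open Finset Function

theorem ZMod.exists_two {P : ZMod 2 → Prop} : (∃ a, P a) ↔ P 0 ∨ P 1 := Fin.exists_fin_two

theorem ZMod.sum_univ_two {M : Type*} [AddCommMonoid M] (h : ZMod 2 → M) :
    ∑ a, h a = h 0 + h 1 := Fin.sum_univ_two h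

section KleinFour

variable {α β : Type*} {f g : α → α}

theorem Function.Involutive.iterate_val_add (hf : Involutive f) (a b : ZMod 2) (x : α) :
    f^[(a + b).val] x = f^[a.val] (f^[b.val] x) := by
  rw [ZMod.val_add, (show IsPeriodicPt f 2 x from hf x).iterate_mod_apply, iterate_add_apply]

abbrev kleinFourAction (hf : Involutive f) (hg : Involutive g) (hfg : Function.Commute f g) :
    AddAction (ZMod 2 × ZMod 2) α where
  vadd a x := f^[a.1.val] (g^[a.2.val] x)
  zero_vadd _ := rfl
  add_vadd a b x := by
    change f^[(a.1 + b.1).val] (g^[(a.2 + b.2).val] x) =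
      f^[a.1.val] (g^[a.2.val] (f^[b.1.val] (g^[b.2.val] x)))
    rw [hf.iterate_val_add, hg.iterate_val_add, (hfg.iterate_iterate _ _).eq]

theorem mem_orbit_kleinFourAction (hf : Involutive f) (hg : Involutive g)
    (hfg : Function.Commute f g) {x y : α} :
    letI := kleinFourAction hf hg hfg
    y ∈ AddAction.orbit (ZMod 2 × ZMod 2) x ↔ y = x ∨ y = f x ∨ y = g x ∨ y = f (g x) := by
  simp only [AddAction.mem_orbit_iff, Prod.exists]
  change (∃ a b : ZMod 2, f^[a.val] (g^[b.val] x) = y) ↔ _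
  simp only [ZMod.exists_two, ZMod.val_zero, ZMod.val_one, iterate_zero_apply, iterate_one,
    or_assoc, eq_comm (b := y)]
  tauto

theorem Fintype.four_mul_card_image_of_involutive [Fintype α] [DecidableEq α] [DecidableEq β]
    (F : α → β) (hf : Involutive f) (hg : Involutive g) (hfg : Function.Commute f g)
    (hF : ∀ x y, F x = F y ↔ y = x ∨ y = f x ∨ y = g x ∨ y = f (g x)) :
    4 * #(univ.image F) =
      Fintype.card α + #{x | f x = x} + #{x | g x = x} + #{x | f (g x) = x} := by
  classical
  let := kleinFourAction hf hg hfg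
  have horbits :
      Fintype.card (AddAction.orbitRel.Quotient (ZMod 2 × ZMod 2) α) = #(univ.image F) := by
    rw [← Set.toFinset_range, Set.toFinset_card]
    refine Fintype.card_congr <|
      (Quotient.congrRight fun x y => ?_).trans (Setoid.quotientKerEquivRange F)
    rw [AddAction.orbitRel_apply, AddAction.mem_orbit_symm, mem_orbit_kleinFourAction,
      Setoid.ker_def, hF]
  have := AddAction.sum_card_fixedBy_eq_card_orbits_mul_card_addGroup (ZMod 2 × ZMod 2) α
  rw [horbits, Fintype.sum_prod_type, ZMod.sum_univ_two, ZMod.sum_univ_two, ZMod.sum_univ_two]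
    at this
  have hvadd : ∀ (a : ZMod 2 × ZMod 2) (x : α), a +ᵥ x = f^[a.1.val] (g^[a.2.val] x) :=
    fun _ _ => rfl
  simp only [Fintype.card_subtype, AddAction.mem_fixedBy, hvadd, ZMod.val_zero, ZMod.val_one,
    iterate_zero_apply, iterate_one, filter_true, card_univ] at this
  have h4 : Fintype.card (ZMod 2 × ZMod 2) = 4 := rfl
  rw [h4] at this
  linarith

theorem Finset.card_filter_univ_coe [DecidableEq α] (s : Finset α) (P : α → Prop)
    [DecidablePred P] :
    #{x : s | P x} = #{x ∈ s | P x} := by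
  rw [univ_eq_attach, filter_attach, card_map, card_attach]

theorem Finset.four_mul_card_image_of_involutive [DecidableEq α] [DecidableEq β] (s : Finset α)
    (F : α → β) (hfs : ∀ x ∈ s, f x ∈ s) (hgs : ∀ x ∈ s, g x ∈ s)
    (hf : ∀ x ∈ s, f (f x) = x) (hg : ∀ x ∈ s, g (g x) = x) (hfg : ∀ x ∈ s, f (g x) = g (f x))
    (hF : ∀ x ∈ s, ∀ y ∈ s, F x = F y ↔ y = x ∨ y = f x ∨ y = g x ∨ y = f (g x)) :
    4 * #(s.image F) =
      #s + #{x ∈ s | f x = x} + #{x ∈ s | g x = x} + #{x ∈ s | f (g x) = x} := by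
  have key := Fintype.four_mul_card_image_of_involutive (fun x : s => F x)
    (f := fun x => ⟨f x, hfs x x.2⟩) (g := fun x => ⟨g x, hgs x x.2⟩)
    (fun x => Subtype.ext (hf x x.2)) (fun x => Subtype.ext (hg x x.2))
    (fun x => Subtype.ext (hfg x x.2)) (fun x y => by simp only [hF x x.2 y y.2, Subtype.ext_iff])
  have himage : (univ.image fun x : s => F x) = s.image F := by
    ext
    simp
  simp only [Subtype.ext_iff, himage, Fintype.card_coe] at key
  rwa [card_filter_univ_coe s (fun x => f x = x), card_filter_univ_coe s (fun x => g x = x),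
    card_filter_univ_coe s (fun x => f (g x) = x)] at key

theorem Finset.card_filter_fixed_eq_of_conj [DecidableEq α] (s : Finset α) (e : α ≃ α)
    (hs : ∀ x, e x ∈ s ↔ x ∈ s) (h : ∀ x ∈ s, g (e x) = e (f x)) :
    #{x ∈ s | g x = x} = #{x ∈ s | f x = x} := by
  refine (card_nbij' e e.symm (fun x hx => ?_) (fun y hy => ?_) (fun x _ => by simp)
    (fun y _ => by simp)).symm
  · simp only [coe_filter, Set.mem_ofPred_eq] at hx ⊢
    exact ⟨(hs x).2 hx.1, by rw [h x hx.1, hx.2]⟩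
  · simp only [coe_filter, Set.mem_ofPred_eq] at hy ⊢
    have hy' : e.symm y ∈ s := (hs _).1 (by simpa using hy.1)
    refine ⟨hy', e.injective ?_⟩
    rw [← h _ hy', Equiv.apply_symm_apply, hy.2]

end KleinFour

section CommRing

variable {R : Type*} [CommRing R] {x : R × R}

def thirdCoord (x : R × R) : R := -(x.1 + x.2 + 1)

def rotate : R × R ≃ R × R where
  toFun x := (x.2, thirdCoord x)
  invFun x := (thirdCoord x, x.1)
  left_inv x := Prod.ext (by simp only [thirdCoord]; ring) rfl
  right_inv x := Prod.ext rfl (by simp only [thirdCoord]; ring)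

theorem thirdCoord_rotate : thirdCoord (rotate x) = x.1 := by
  simp only [rotate, thirdCoord, Equiv.coe_fn_mk]; ring

def triple [DecidableEq R] (x : R × R) : Finset ((R × R) × ℕ) :=
  {(x, 1), ((x.2, thirdCoord x), 3), ((thirdCoord x, x.1), 2)}

end CommRing

section Field

variable {K : Type*} [Field K] {x : K × K}

def invFst (x : K × K) : K × K := (x.1⁻¹, x.1⁻¹ * thirdCoord x)

def invSnd (x : K × K) : K × K := (x.2⁻¹ * thirdCoord x, x.2⁻¹)

theorem thirdCoord_invFst (hi : x.1 ≠ 0) : thirdCoord (invFst x) = x.1⁻¹ * x.2 := by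
  simp only [invFst, thirdCoord]; field_simp; ring

theorem thirdCoord_invSnd (hj : x.2 ≠ 0) : thirdCoord (invSnd x) = x.1 * x.2⁻¹ := by
  simp only [invSnd, thirdCoord]; field_simp; ring

theorem invFst_invFst (hi : x.1 ≠ 0) : invFst (invFst x) = x := by
  ext
  · simp [invFst]
  · rw [invFst, thirdCoord_invFst hi]; simp [invFst, hi]

theorem invSnd_invSnd (hj : x.2 ≠ 0) : invSnd (invSnd x) = x := by
  ext
  · rw [invSnd, thirdCoord_invSnd hj]; simp only [invSnd, inv_inv]; field_simp
  · simp [invSnd]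

theorem invFst_invSnd (hj : x.2 ≠ 0) :
    invFst (invSnd x) = (x.2 * (thirdCoord x)⁻¹, x.1 * (thirdCoord x)⁻¹) := by
  rw [invFst, thirdCoord_invSnd hj]
  ext
  · simp only [invSnd, mul_inv, inv_inv]
  · simp only [invSnd]; field_simp

theorem invSnd_invFst (hi : x.1 ≠ 0) (hj : x.2 ≠ 0) : invSnd (invFst x) = invFst (invSnd x) := by
  rw [invFst_invSnd hj, invSnd, thirdCoord_invFst hi]
  ext
  · simp only [invFst]; field_simp
  · simp only [invFst, mul_inv, inv_inv]

theorem thirdCoord_invFst_invSnd (hj : x.2 ≠ 0) (hk : thirdCoord x ≠ 0) :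
    thirdCoord (invFst (invSnd x)) = (thirdCoord x)⁻¹ := by
  rw [invFst_invSnd hj]
  simp only [thirdCoord, ne_eq, neg_eq_zero] at hk ⊢
  field_simp
  ring

theorem invSnd_swap : invSnd x.swap = (invFst x).swap := by
  simp [invSnd, invFst, thirdCoord, add_comm x.1]

theorem invFst_invSnd_rotate (hi : x.1 ≠ 0) (hk : thirdCoord x ≠ 0) :
    invFst (invSnd (rotate x)) = rotate (invFst x) := by
  rw [invFst_invSnd hk, thirdCoord_rotate]
  change (thirdCoord x * x.1⁻¹, x.2 * x.1⁻¹) = (x.1⁻¹ * thirdCoord x, thirdCoord (invFst x))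
  rw [thirdCoord_invFst hi, mul_comm, mul_comm x.2]

variable [DecidableEq K]

def kleinOrbit (x : K × K) : Finset (K × K) :=
  {x, invFst x, invSnd x, invFst (invSnd x)}

theorem mem_kleinOrbit {y : K × K} :
    y ∈ kleinOrbit x ↔ y = x ∨ y = invFst x ∨ y = invSnd x ∨ y = invFst (invSnd x) := by
  simp only [kleinOrbit, mem_insert, mem_singleton]

theorem kleinOrbit_invFst (hi : x.1 ≠ 0) (hj : x.2 ≠ 0) (hk : thirdCoord x ≠ 0) :
    kleinOrbit (invFst x) = kleinOrbit x := by
  have hτ : (invSnd x).1 ≠ 0 := mul_ne_zero (inv_ne_zero hj) hk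
  rw [kleinOrbit, kleinOrbit, invFst_invFst hi, invSnd_invFst hi hj,
    invFst_invFst hτ]
  ext y
  simp only [mem_insert, mem_singleton]
  tauto

theorem kleinOrbit_invSnd (hj : x.2 ≠ 0) : kleinOrbit (invSnd x) = kleinOrbit x := by
  rw [kleinOrbit, kleinOrbit, invSnd_invSnd hj]
  ext y
  simp only [mem_insert, mem_singleton]
  tauto

end Field

section ZModPrime

variable {p : ℕ} [Fact p.Prime] {x y : ZMod p × ZMod p}

theorem mem_sigmaF : x ∈ SigmaF p ↔ x.1 ≠ 0 ∧ x.2 ≠ 0 ∧ thirdCoord x ≠ 0 := by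
  simp only [SigmaF, mem_filter, mem_univ, true_and, thirdCoord, ne_eq, neg_eq_zero]

theorem invFst_mem_sigmaF (hx : x ∈ SigmaF p) : invFst x ∈ SigmaF p := by
  obtain ⟨hi, hj, hk⟩ := mem_sigmaF.1 hx
  refine mem_sigmaF.2 ⟨inv_ne_zero hi, mul_ne_zero (inv_ne_zero hi) hk, ?_⟩
  rw [thirdCoord_invFst hi]
  exact mul_ne_zero (inv_ne_zero hi) hj

theorem invSnd_mem_sigmaF (hx : x ∈ SigmaF p) : invSnd x ∈ SigmaF p := by
  obtain ⟨hi, hj, hk⟩ := mem_sigmaF.1 hx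
  refine mem_sigmaF.2 ⟨mul_ne_zero (inv_ne_zero hj) hk, inv_ne_zero hj, ?_⟩
  rw [thirdCoord_invSnd hj]
  exact mul_ne_zero hi (inv_ne_zero hj)

theorem rotate_mem_sigmaF_iff : rotate x ∈ SigmaF p ↔ x ∈ SigmaF p := by
  simp only [mem_sigmaF, thirdCoord_rotate]
  change x.2 ≠ 0 ∧ thirdCoord x ≠ 0 ∧ x.1 ≠ 0 ↔ _
  tauto

theorem lam_eq_biUnion (hx : x ∈ SigmaF p) : Lam p x = (kleinOrbit x).biUnion triple := by
  obtain ⟨hi, hj, hk⟩ := mem_sigmaF.1 hx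
  simp only [kleinOrbit, biUnion_insert, singleton_biUnion, triple]
  rw [thirdCoord_invFst hi, thirdCoord_invSnd hj, thirdCoord_invFst_invSnd hj hk,
    invFst_invSnd hj]
  ext e
  simp only [Lam, invFst, invSnd, thirdCoord, mem_union, mem_insert, mem_singleton, Prod.mk.eta]
  tauto

theorem kleinOrbit_eq_of_mem (hx : x ∈ SigmaF p) (hy : y ∈ kleinOrbit x) :
    kleinOrbit y = kleinOrbit x := by
  obtain ⟨hi, hj, hk⟩ := mem_sigmaF.1 hx
  obtain ⟨hτi, -, hτk⟩ := mem_sigmaF.1 (invSnd_mem_sigmaF hx)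
  rcases mem_kleinOrbit.1 hy with rfl | rfl | rfl | rfl
  · rfl
  · exact kleinOrbit_invFst hi hj hk
  · exact kleinOrbit_invSnd hj
  · rw [kleinOrbit_invFst hτi (inv_ne_zero hj) hτk, kleinOrbit_invSnd hj]

theorem lam_eq_lam_iff (hx : x ∈ SigmaF p) (hy : y ∈ SigmaF p) :
    Lam p x = Lam p y ↔ y ∈ kleinOrbit x := by
  refine ⟨fun h => ?_, fun h => ?_⟩
  · have hy1 : (y, 1) ∈ Lam p y := by simp [Lam]
    rw [← h, lam_eq_biUnion hx, mem_biUnion] at hy1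
    obtain ⟨z, hz, hyz⟩ := hy1
    obtain rfl : y = z := by simpa [triple] using hyz
    exact hz
  · rw [lam_eq_biUnion hx, lam_eq_biUnion hy, kleinOrbit_eq_of_mem hx h]

theorem swap_mem_sigmaF_iff : x.swap ∈ SigmaF p ↔ x ∈ SigmaF p := by
  simp only [mem_sigmaF, thirdCoord, Prod.fst_swap, Prod.snd_swap, add_comm x.2]
  tauto

theorem card_sigmaF : #(SigmaF p) + 3 * p = p ^ 2 + 3 := by
  set units : Finset (ZMod p) := univ.erase 0
  have hsplit : SigmaF p = {x ∈ units ×ˢ units | thirdCoord x ≠ 0} := by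
    ext x
    simp [units, mem_sigmaF, and_assoc]
  have hline : {x ∈ units ×ˢ units | ¬thirdCoord x ≠ 0} =
      (units.erase (-1)).image fun i => (i, -(i + 1)) := by
    ext ⟨a, b⟩
    simp only [units, thirdCoord, mem_filter, mem_product, mem_image, mem_erase, mem_univ,
      Prod.mk.injEq, ne_eq, not_not, neg_eq_zero, and_true]
    constructor
    · rintro ⟨⟨ha, hb⟩, hk⟩
      exact ⟨a, ⟨fun h => hb (by linear_combination hk - h), ha⟩, rfl, by linear_combination -hk⟩
    · rintro ⟨i, ⟨hi1, hi0⟩, rfl, rfl⟩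
      exact ⟨⟨hi0, fun h => hi1 (by linear_combination -h)⟩, by ring⟩
  have hcount := card_filter_add_card_filter_not (s := units ×ˢ units)
    (fun x => thirdCoord x ≠ 0)
  rw [← hsplit, hline, card_image_of_injective _ fun a b h => (Prod.mk.inj h).1, card_product,
    card_erase_of_mem (by simp [units]), card_erase_of_mem (mem_univ _), card_univ, ZMod.card]
    at hcount
  obtain ⟨q, rfl⟩ := Nat.exists_eq_add_of_le (Fact.out : p.Prime).two_le
  simp only [Nat.add_sub_cancel, show 2 + q - 1 = q + 1 by omega] at hcount
  nlinarith

theorem filter_invFst_eq_self (h2 : (2 : ZMod p) ≠ 0) :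
    {x ∈ SigmaF p | invFst x = x} = insert (1, -1) ((univ.erase 0).image fun j => (-1, j)) := by
  ext ⟨a, b⟩
  rw [mem_filter, mem_sigmaF]
  simp only [invFst, thirdCoord, mem_insert, mem_image, mem_erase, mem_univ, and_true,
    Prod.mk.injEq]
  constructor
  · rintro ⟨⟨ha, hb, -⟩, ha1, hb1⟩
    have : a * a = 1 := by rw [← inv_mul_cancel₀ ha, ha1]
    rcases mul_self_eq_one_iff.1 this with rfl | rfl
    · refine Or.inl ⟨rfl, mul_left_cancel₀ h2 ?_⟩
      rw [inv_one, one_mul] at hb1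
      linear_combination -hb1
    · exact Or.inr ⟨b, hb, rfl, rfl⟩
  · rintro (⟨rfl, rfl⟩ | ⟨j, hj, rfl, rfl⟩)
    · refine ⟨⟨one_ne_zero, neg_ne_zero.2 one_ne_zero, by simp⟩, inv_one, by simp⟩
    · refine ⟨⟨neg_ne_zero.2 one_ne_zero, hj, by simpa using hj⟩, by simp, by simp⟩

theorem card_filter_invFst_eq_self (hp : p ≠ 2) : #{x ∈ SigmaF p | invFst x = x} = p := by
  have hchar : ringChar (ZMod p) ≠ 2 := by rwa [ZMod.ringChar_zmod_n]
  rw [filter_invFst_eq_self (Ring.two_ne_zero hchar), card_insert_of_notMem,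
    card_image_of_injective _ (Prod.mk_right_injective _), card_erase_of_mem (mem_univ _),
    card_univ, ZMod.card, Nat.sub_add_cancel (Fact.out : p.Prime).one_le]
  simpa using Ring.neg_one_ne_one_of_char_ne_two hchar

theorem four_mul_card_image_lam (hp : p ≠ 2) : 4 * #((SigmaF p).image (Lam p)) = p ^ 2 + 3 := by
  have hτ : #{x ∈ SigmaF p | invSnd x = x} = #{x ∈ SigmaF p | invFst x = x} :=
    card_filter_fixed_eq_of_conj _ (Equiv.prodComm _ _) (fun _ => swap_mem_sigmaF_iff)
      fun _ _ => invSnd_swap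
  have hστ : #{x ∈ SigmaF p | invFst (invSnd x) = x} = #{x ∈ SigmaF p | invFst x = x} :=
    card_filter_fixed_eq_of_conj _ rotate (fun _ => rotate_mem_sigmaF_iff) fun x hx =>
      invFst_invSnd_rotate (mem_sigmaF.1 hx).1 (mem_sigmaF.1 hx).2.2
  rw [four_mul_card_image_of_involutive (SigmaF p) (Lam p) (fun _ => invFst_mem_sigmaF)
    (fun _ => invSnd_mem_sigmaF) (fun x hx => invFst_invFst (mem_sigmaF.1 hx).1)
    (fun x hx => invSnd_invSnd (mem_sigmaF.1 hx).2.1)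
    (fun x hx => (invSnd_invFst (mem_sigmaF.1 hx).1 (mem_sigmaF.1 hx).2.1).symm)
    (fun x hx y hy => (lam_eq_lam_iff hx hy).trans mem_kleinOrbit),
    hτ, hστ, card_filter_invFst_eq_self hp]
  linarith [card_sigmaF (p := p)]

end ZModPrime

theorem stmt_16_general (p : ℕ) [Fact p.Prime] :
    (3 < p → ((SigmaF p).image (Lam p)).card = (p ^ 2 + 3) / 4) ∧
    (p = 3 → ((SigmaF p).image (Lam p)).card = 3) := by
  refine ⟨fun hp => ?_, fun hp => ?_⟩
  · have := four_mul_card_image_lam (p := p) (by omega)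
    omega
  · subst hp
    have := four_mul_card_image_lam (p := 3) (by omega)
    omega

theorem stmt_16 (p : ℕ) [Fact p.Prime] (hodd : Odd p) :
    (3 < p → ((SigmaF p).image (Lam p)).card = (p ^ 2 + 3) / 4) ∧
    (p = 3 → ((SigmaF p).image (Lam p)).card = 3) :=
  stmt_16_general p
end
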